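/- The double integral (1/(8π)) ∬_{ℝ²} u_1(x,t)^2 dx dt equals 1, where u_1(x,t) = 4(1 - x^2 + t^2)/(1 + x^2 + t^2)^2. -/

import Mathlib

/-!
In polar coordinates `u₁ = 4 (1 - r² cos 2θ) / (1 + r²)²`. Integrating the square over the angle
gives `∫ θ in (-π, π), u₁² = 16π (2 + r⁴) / (1 + r²)⁴`, and with `w = (1 + r²)⁻¹` the radial
integrand `r (2 + r⁴) / (1 + r²)⁴` has the primitive `-(w - w² + w³) / 2`, which runs from `-1/2`
at `r = 0` to `0` at infinity. Hence `∬ u₁² = 16π · 1/2 = 8π`.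
-/

open MeasureTheory Real Set Filter Topology

noncomputable def u₁ (x t : ℝ) : ℝ := 4 * (1 - x ^ 2 + t ^ 2) / (1 + x ^ 2 + t ^ 2) ^ 2

lemma u₁_mul_cos_mul_sin (r θ : ℝ) :
    u₁ (r * cos θ) (r * sin θ) = 4 * (1 - r ^ 2 * cos (2 * θ)) / (1 + r ^ 2) ^ 2 := by
  have hnum : 1 - (r * cos θ) ^ 2 + (r * sin θ) ^ 2 = 1 - r ^ 2 * cos (2 * θ) := by
    rw [cos_two_mul]; linear_combination r ^ 2 * sin_sq_add_cos_sq θ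
  have hden : 1 + (r * cos θ) ^ 2 + (r * sin θ) ^ 2 = 1 + r ^ 2 := by
    linear_combination r ^ 2 * sin_sq_add_cos_sq θ
  rw [u₁, hnum, hden]

lemma integral_sq_add_mul_cos_two_mul (a b : ℝ) :
    ∫ θ in Ioo (-π) π, (a + b * cos (2 * θ)) ^ 2 = π * (2 * a ^ 2 + b ^ 2) := by
  have hderiv : ∀ θ : ℝ, HasDerivAt
      (fun θ => (a ^ 2 + b ^ 2 / 2) * θ + a * b * sin (2 * θ)
        + b ^ 2 / 4 * (sin (2 * θ) * cos (2 * θ)))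
      ((a + b * cos (2 * θ)) ^ 2) θ := by
    intro θ
    have h2 : HasDerivAt (fun θ : ℝ => 2 * θ) 2 θ := by
      simpa using (hasDerivAt_id θ).const_mul 2
    refine ((((hasDerivAt_id θ).const_mul _).add (h2.sin.const_mul _)).add
      ((h2.sin.mul h2.cos).const_mul _)).congr_deriv ?_
    linear_combination (-b ^ 2 / 2) * sin_sq_add_cos_sq (2 * θ)
  rw [← integral_Ioc_eq_integral_Ioo, ← intervalIntegral.integral_of_le (by linarith [pi_pos]),
    intervalIntegral.integral_eq_sub_of_hasDerivAt (fun θ _ => hderiv θ)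
      (by apply Continuous.intervalIntegrable; fun_prop)]
  simp only [mul_neg, sin_neg, sin_two_pi]
  ring

lemma hasDerivAt_radialPrimitive (r : ℝ) :
    HasDerivAt (fun r : ℝ => -((1 + r ^ 2)⁻¹ - ((1 + r ^ 2)⁻¹) ^ 2 + ((1 + r ^ 2)⁻¹) ^ 3) / 2)
      (r * (2 + r ^ 4) / (1 + r ^ 2) ^ 4) r := by
  have hw : HasDerivAt (fun r : ℝ => (1 + r ^ 2)⁻¹) (-(2 * r) / (1 + r ^ 2) ^ 2) r := by
    refine (((hasDerivAt_pow 2 r).const_add 1).inv (by positivity)).congr_deriv ?_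
    simp
  refine (((hw.sub (hw.pow 2)).add (hw.pow 3)).neg.div_const 2).congr_deriv ?_
  have : 1 + r ^ 2 ≠ 0 := by positivity
  norm_num
  field_simp
  ring

lemma tendsto_radialPrimitive_atTop :
    Tendsto (fun r : ℝ => -((1 + r ^ 2)⁻¹ - ((1 + r ^ 2)⁻¹) ^ 2 + ((1 + r ^ 2)⁻¹) ^ 3) / 2)
      atTop (𝓝 0) := by
  have hw : Tendsto (fun r : ℝ => (1 + r ^ 2)⁻¹) atTop (𝓝 0) :=
    tendsto_inv_atTop_zero.comp (tendsto_atTop_add_const_left _ 1 (tendsto_pow_atTop two_ne_zero))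
  simpa using (((hw.sub (hw.pow 2)).add (hw.pow 3)).neg.div_const 2)

lemma integrableOn_radial :
    IntegrableOn (fun r : ℝ => r * (2 + r ^ 4) / (1 + r ^ 2) ^ 4) (Ioi 0) :=
  integrableOn_Ioi_deriv_of_nonneg' (fun r _ => hasDerivAt_radialPrimitive r)
    (fun r hr => by have : 0 < r := hr; positivity) tendsto_radialPrimitive_atTop

lemma integral_radial : ∫ r in Ioi (0 : ℝ), r * (2 + r ^ 4) / (1 + r ^ 2) ^ 4 = 1 / 2 := by
  rw [integral_Ioi_of_hasDerivAt_of_nonneg' (fun r _ => hasDerivAt_radialPrimitive r)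
    (fun r hr => by have : 0 < r := hr; positivity) tendsto_radialPrimitive_atTop]
  norm_num

lemma integrableOn_u₁_sq_polarCoord :
    IntegrableOn
      (fun p : ℝ × ℝ => p.1 * (4 * (1 - p.1 ^ 2 * cos (2 * p.2)) / (1 + p.1 ^ 2) ^ 2) ^ 2)
      (Ioi 0 ×ˢ Ioo (-π) π) := by
  have hdom : IntegrableOn (fun p : ℝ × ℝ => 32 * (p.1 * (2 + p.1 ^ 4) / (1 + p.1 ^ 2) ^ 4))
      (Ioi 0 ×ˢ Ioo (-π) π) := by
    rw [IntegrableOn, Measure.volume_eq_prod, ← Measure.prod_restrict]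
    exact (integrableOn_radial.const_mul 32).comp_fst _
  refine hdom.mono' ?_ ?_
  · apply Continuous.aestronglyMeasurable
    fun_prop (disch := exact fun _ => by positivity)
  filter_upwards [ae_restrict_mem (measurableSet_Ioi.prod measurableSet_Ioo)] with ⟨r, θ⟩ hp
  have hr : 0 < r := hp.1
  have hsq : (1 - r ^ 2 * cos (2 * θ)) ^ 2 ≤ 2 * (2 + r ^ 4) := by
    nlinarith [mul_le_mul_of_nonneg_left (cos_sq_le_one (2 * θ)) (pow_nonneg hr.le 4),
      sq_nonneg (1 + r ^ 2 * cos (2 * θ))]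
  rw [norm_of_nonneg (by positivity)]
  calc r * (4 * (1 - r ^ 2 * cos (2 * θ)) / (1 + r ^ 2) ^ 2) ^ 2
      = 16 * (1 - r ^ 2 * cos (2 * θ)) ^ 2 * (r / (1 + r ^ 2) ^ 4) := by
        rw [div_pow, ← pow_mul]; ring
    _ ≤ 16 * (2 * (2 + r ^ 4)) * (r / (1 + r ^ 2) ^ 4) := by gcongr
    _ = 32 * (r * (2 + r ^ 4) / (1 + r ^ 2) ^ 4) := by ring

theorem integral_u₁_sq : ∫ p : ℝ × ℝ, u₁ p.1 p.2 ^ 2 = 8 * π := by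
  rw [← integral_comp_polarCoord_symm (fun p : ℝ × ℝ => u₁ p.1 p.2 ^ 2)]
  simp only [polarCoord_symm_apply, polarCoord_target, smul_eq_mul, u₁_mul_cos_mul_sin]
  rw [Measure.volume_eq_prod, setIntegral_prod _
    (by rw [← Measure.volume_eq_prod]; exact integrableOn_u₁_sq_polarCoord)]
  calc ∫ r in Ioi 0, ∫ θ in Ioo (-π) π, r * (4 * (1 - r ^ 2 * cos (2 * θ)) / (1 + r ^ 2) ^ 2) ^ 2
      = ∫ r in Ioi 0, 16 * π * (r * (2 + r ^ 4) / (1 + r ^ 2) ^ 4) := by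
        refine setIntegral_congr_fun measurableSet_Ioi fun r _ => ?_
        have hpolar : ∀ θ, r * (4 * (1 - r ^ 2 * cos (2 * θ)) / (1 + r ^ 2) ^ 2) ^ 2
            = 16 * r / (1 + r ^ 2) ^ 4 * (1 + -r ^ 2 * cos (2 * θ)) ^ 2 := fun θ => by
          rw [div_pow, ← pow_mul]; ring
        simp only [hpolar, integral_const_mul, integral_sq_add_mul_cos_two_mul]
        ring
    _ = 8 * π := by rw [integral_const_mul, integral_radial]; ring

theorem stmt8 :
    (1 / (8 * π)) *
      ∫ p : ℝ × ℝ, (4 * (1 - p.1^2 + p.2^2) / (1 + p.1^2 + p.2^2)^2)^2 = 1 := by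
  show 1 / (8 * π) * ∫ p : ℝ × ℝ, u₁ p.1 p.2 ^ 2 = 1
  rw [integral_u₁_sq]
  field_simp
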